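/- For every ρ ∈ (−1, 1), the equivalence 'g_ρ(u) ≥ 0 if and only if u ≤ 0' holds for all u ∈ ℝ if and only if ρ ≤ √(π/(2+π)), where g_ρ(u) = 1 − 2·Φ(−ρu/√(1−ρ²)) − u. (Equivalently, the threshold profile {1(u₁ ≤ 0); 1(u₂ ≤ 0)} is a mutual-best-response configuration exactly when ρ ∈ (−1, √(π/(2+π))].) -/

import Mathlib

/-!
With `c = ρ / √(1 - ρ²)` and `Φ(-x) = 1 - Φ(x)`, the payoff is `g(u) = 2Φ(cu) - 1 - u`, an odd
function of `u`, so the equivalence holds iff `g < 0` on `(0, ∞)`. As the density `φ` decreases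
on `[0, ∞)`, for `cu > 0` we have `cu·φ(cu) ≤ Φ(cu) - 1/2 < cu·φ(0)`: hence `g < 0` on `(0, ∞)`
exactly when the slope `2cφ(0)` of `u ↦ 2Φ(cu) - 1` at `0` is at most `1`, i.e.
`c ≤ √(π/2)`, which is `ρ ≤ √(π/(2+π))`.
-/

open ProbabilityTheory Real Set

/-- The cumulative distribution function of the standard normal distribution `N(0,1)`. -/
noncomputable def stdNormCDF : ℝ → ℝ := fun x => ProbabilityTheory.cdf (gaussianReal 0 1) x

open MeasureTheory Filter Topology

local notation "φ" => gaussianPDFReal 0 1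

lemma gaussianPDFReal_zero_one_apply (t : ℝ) : φ t = (√(2 * π))⁻¹ * exp (-t ^ 2 / 2) := by
  simp [gaussianPDFReal]

@[fun_prop]
lemma continuous_gaussianPDFReal_zero_one : Continuous φ := by
  simp_rw [funext gaussianPDFReal_zero_one_apply]
  fun_prop

lemma strictAntiOn_gaussianPDFReal_zero_one : StrictAntiOn φ (Ici 0) := by
  intro a ha b _ hab
  simp only [gaussianPDFReal_zero_one_apply]
  gcongr

lemma two_mul_gaussianPDFReal_zero_one_zero : 2 * φ 0 = (√(π / 2))⁻¹ := by
  rw [gaussianPDFReal_zero_one_apply, show 2 * π = 2 ^ 2 * (π / 2) by ring,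
    sqrt_mul (by positivity), sqrt_sq zero_le_two, zero_pow two_ne_zero, neg_zero, zero_div,
    exp_zero, mul_one]
  field_simp

lemma stdNormCDF_eq_integral (x : ℝ) : stdNormCDF x = ∫ t in Iic x, φ t := by
  rw [stdNormCDF, cdf_eq_real, measureReal_def, gaussianReal_apply_eq_integral 0 one_ne_zero,
    ENNReal.toReal_ofReal (integral_nonneg fun t => gaussianPDFReal_nonneg 0 1 t)]

lemma stdNormCDF_sub_stdNormCDF (x y : ℝ) : stdNormCDF y - stdNormCDF x = ∫ t in x..y, φ t := by
  have hφ : ∀ s, IntegrableOn φ s := fun _ => (integrable_gaussianPDFReal 0 1).integrableOn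
  rw [stdNormCDF_eq_integral, stdNormCDF_eq_integral,
    intervalIntegral.integral_Iic_sub_Iic (hφ _) (hφ _)]

lemma stdNormCDF_neg (x : ℝ) : stdNormCDF (-x) = 1 - stdNormCDF x := by
  have hφ : ∀ s, IntegrableOn φ s := fun _ => (integrable_gaussianPDFReal 0 1).integrableOn
  have h_tail : stdNormCDF (-x) = ∫ t in Ioi x, φ t := by
    simp_rw [stdNormCDF_eq_integral, ← integral_comp_neg_Ioi, gaussianPDFReal_zero_one_apply,
      neg_sq]
  rw [h_tail, stdNormCDF_eq_integral, ← integral_gaussianPDFReal_eq_one 0 one_ne_zero,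
    ← intervalIntegral.integral_Iic_add_Ioi (b := x) (hφ _) (hφ _), add_sub_cancel_left]

lemma stdNormCDF_zero : stdNormCDF 0 = 1 / 2 := by
  linarith [neg_zero (G := ℝ) ▸ stdNormCDF_neg 0]

lemma monotone_stdNormCDF : Monotone stdNormCDF :=
  (cdf (gaussianReal 0 1)).mono

lemma stdNormCDF_sub_half_lt {x : ℝ} (hx : 0 < x) : stdNormCDF x - 1 / 2 < x * φ 0 := by
  have hφ := strictAntiOn_gaussianPDFReal_zero_one
  rw [← stdNormCDF_zero, stdNormCDF_sub_stdNormCDF]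
  calc ∫ t in 0..x, φ t < ∫ _ in 0..x, φ 0 :=
        intervalIntegral.integral_lt_integral_of_continuousOn_of_le_of_exists_lt hx
          continuous_gaussianPDFReal_zero_one.continuousOn continuousOn_const
          (fun t ht => hφ.antitoneOn self_mem_Ici ht.1.le ht.1.le)
          ⟨x, ⟨hx.le, le_rfl⟩, hφ self_mem_Ici hx.le hx⟩
    _ = x * φ 0 := by simp

lemma mul_le_stdNormCDF_sub_half {x : ℝ} (hx : 0 ≤ x) : x * φ x ≤ stdNormCDF x - 1 / 2 := by
  rw [← stdNormCDF_zero, stdNormCDF_sub_stdNormCDF]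
  calc x * φ x = ∫ _ in 0..x, φ x := by simp
    _ ≤ ∫ t in 0..x, φ t :=
        intervalIntegral.integral_mono_on hx intervalIntegrable_const
          (integrable_gaussianPDFReal 0 1).intervalIntegrable fun t ht =>
          strictAntiOn_gaussianPDFReal_zero_one.antitoneOn ht.1 (ht.1.trans ht.2) ht.2

lemma mul_two_mul_gaussianPDFReal_zero_one_le_one_iff {c : ℝ} :
    c * (2 * φ 0) ≤ 1 ↔ c ≤ √(π / 2) := by
  rw [two_mul_gaussianPDFReal_zero_one_zero, ← div_eq_mul_inv,
    div_le_one (sqrt_pos.2 (by positivity))]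

/-- By `Φ(-x) = 1 - Φ(x)`, `g_ρ(u) = thresholdPayoff (ρ / √(1 - ρ²)) u`. -/
noncomputable def thresholdPayoff (c u : ℝ) : ℝ := 2 * stdNormCDF (c * u) - 1 - u

lemma thresholdPayoff_neg (c u : ℝ) : thresholdPayoff c (-u) = -thresholdPayoff c u := by
  rw [thresholdPayoff, thresholdPayoff, mul_neg, stdNormCDF_neg]
  ring

lemma thresholdPayoff_neg_of_pos {c u : ℝ} (hc : c * (2 * φ 0) ≤ 1) (hu : 0 < u) :
    thresholdPayoff c u < 0 := by
  rw [thresholdPayoff]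
  rcases le_or_gt c 0 with hc0 | hc0
  · have : stdNormCDF (c * u) ≤ 1 / 2 :=
      stdNormCDF_zero ▸ monotone_stdNormCDF (mul_nonpos_of_nonpos_of_nonneg hc0 hu.le)
    linarith
  · have := stdNormCDF_sub_half_lt (mul_pos hc0 hu)
    nlinarith

lemma exists_thresholdPayoff_pos {c : ℝ} (hc : 1 < c * (2 * φ 0)) :
    ∃ u > 0, 0 < thresholdPayoff c u := by
  have hc0 : 0 < c :=
    pos_of_mul_pos_left (one_pos.trans hc) (by linarith [gaussianPDFReal_pos 0 1 0 one_ne_zero])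
  have h_slope : ∀ᶠ u in 𝓝[>] 0, 1 < c * (2 * φ (c * u)) := by
    have := (by fun_prop : Continuous fun u => c * (2 * φ (c * u))).tendsto 0
    simp only [mul_zero] at this
    exact nhdsWithin_le_nhds (this.eventually (lt_mem_nhds hc))
  obtain ⟨u, h_slope_u, hu⟩ := (h_slope.and self_mem_nhdsWithin).exists
  refine ⟨u, hu, ?_⟩
  have := mul_le_stdNormCDF_sub_half (mul_pos hc0 hu).le
  rw [thresholdPayoff]
  nlinarith

lemma forall_thresholdPayoff_nonneg_iff_nonpos_iff {c : ℝ} :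
    (∀ u, thresholdPayoff c u ≥ 0 ↔ u ≤ 0) ↔ c * (2 * φ 0) ≤ 1 := by
  refine ⟨fun h => ?_, fun hc u => ?_⟩
  · by_contra! hc
    obtain ⟨u, hu, h_pos⟩ := exists_thresholdPayoff_pos hc
    exact hu.not_ge ((h u).1 h_pos.le)
  · rcases lt_trichotomy u 0 with hu | rfl | hu
    · have := thresholdPayoff_neg_of_pos hc (neg_pos.2 hu)
      rw [thresholdPayoff_neg] at this
      exact iff_of_true (by linarith) hu.le
    · simp [thresholdPayoff, stdNormCDF_zero]
    · exact iff_of_false (thresholdPayoff_neg_of_pos hc hu).not_ge hu.not_ge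

lemma div_sqrt_one_sub_sq_le_sqrt_iff {ρ a : ℝ} (hρ : ρ ^ 2 < 1) (ha : 0 ≤ a) :
    ρ / √(1 - ρ ^ 2) ≤ √a ↔ ρ ≤ √(a / (1 + a)) := by
  have h_pos : 0 < 1 - ρ ^ 2 := sub_pos.2 hρ
  rcases le_or_gt ρ 0 with hρ0 | hρ0
  · exact iff_of_true ((div_nonpos_of_nonpos_of_nonneg hρ0 (sqrt_nonneg _)).trans (sqrt_nonneg _))
      (hρ0.trans (sqrt_nonneg _))
  · rw [le_sqrt' (div_pos hρ0 (sqrt_pos.2 h_pos)), le_sqrt' hρ0, div_pow, sq_sqrt h_pos.le,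
      div_le_iff₀ h_pos, le_div_iff₀ (by positivity)]
    constructor <;> intro <;> nlinarith

/-- For every `ρ ∈ (−1, 1)`, the equivalence `g_ρ(u) ≥ 0 ↔ u ≤ 0` holds for all `u ∈ ℝ` iff
`ρ ≤ √(π/(2+π))`, where `g_ρ(u) = 1 − 2·Φ(−ρu/√(1−ρ²)) − u`. -/
theorem stmt_1 (ρ : ℝ) (hρ : ρ ∈ Set.Ioo (-1 : ℝ) 1) :
    (∀ u : ℝ, 1 - 2 * stdNormCDF (-ρ * u / Real.sqrt (1 - ρ ^ 2)) - u ≥ 0 ↔ u ≤ 0) ↔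
      ρ ≤ Real.sqrt (π / (2 + π)) := by
  have hρ2 : ρ ^ 2 < 1 := (sq_lt_one_iff_abs_lt_one ρ).2 (abs_lt.2 hρ)
  have hg : ∀ u, 1 - 2 * stdNormCDF (-ρ * u / √(1 - ρ ^ 2)) - u =
      thresholdPayoff (ρ / √(1 - ρ ^ 2)) u := by
    intro u
    rw [thresholdPayoff, neg_mul, neg_div, stdNormCDF_neg, div_mul_eq_mul_div]
    ring
  rw [show π / (2 + π) = π / 2 / (1 + π / 2) by field_simp,
    ← div_sqrt_one_sub_sq_le_sqrt_iff hρ2 (by positivity),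
    ← mul_two_mul_gaussianPDFReal_zero_one_le_one_iff]
  simp_rw [hg]
  exact forall_thresholdPayoff_nonneg_iff_nonpos_iff
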